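/- arXiv:2302.11105 — 4 statements merged into one kernel-verified Lean document; each statement's English description precedes it below -/
import Mathlib

section
/- Let g = sl_{2n+1}(ℂ) with the order-4 special automorphism σ = τ·(√-1)^{ad h}, where τ is the nontrivial diagram automorphism and α_i(h) = δ_{i,n} + δ_{i,n+1}. Then the fixed subalgebra g^σ is isomorphic to sp_{2n}(ℂ), and as g^σ-modules, both eigenspaces g_1 and g_3 (the i-eigenspace and (-i)-eigenspace of σ) are isomorphic to the standard 2n-dimensional representation of sp_{2n}. -/
/-!
On traceless matrices `σ` is a Lie algebra map and `sl_{2n+1}` is generated by the `e_i` and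
`f_θ`, so `σ` agrees on `sl_{2n+1}` with the automorphism `X ↦ -A Xᵀ A⁻¹`, where `A` is the
antidiagonal matrix whose entries are read off from `σ e_i` and `σ f_θ`.
The fixed points of this automorphism form the Lie algebra of the bilinear form with Gram
matrix `A⁻¹`. Since `A_{p,p̄} / A_{p̄,p}` is `1` at the middle index `n` and `-1` at every other
index, this form is symplectic on the `2n` outer coordinates and symmetric on the middle one.
Hence `σ²` is `1` on the outer block and on the middle diagonal entry, and `-1` on the rest of
the middle row and column. So the fixed points are supported on the outer block, where a
diagonal sign change identifies them with `sp_{2n}`, while the `±i`-eigenvectors are supported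
on the middle row and column and are determined by their middle column, on which the fixed
points act through their outer block.
-/

attribute [local instance 100] LieRing.ofAssociativeRing

open Matrix Complex

namespace Matrix

variable {ι R : Type*} [DecidableEq ι] [Fintype ι] [CommRing R]

theorem lie_single_single_of_ne (a b c : ι) (h : a ≠ c) :
    ⁅single a b (1 : R), single b c (1 : R)⁆ = single a c 1 := by
  rw [Ring.lie_def, single_mul_single_same, single_mul_single_of_ne (h := h.symm), one_mul,
    sub_zero]

theorem lie_single_single_swap (a b : ι) :
    ⁅single a b (1 : R), single b a (1 : R)⁆ = single a a 1 - single b b 1 := by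
  rw [Ring.lie_def, single_mul_single_same, single_mul_single_same, one_mul]

end Matrix

namespace LieAlgebra.SpecialLinear

variable {ι R : Type*} [DecidableEq ι] [Fintype ι] [CommRing R]

theorem sl_le_of_single_mem {L : LieSubalgebra R (Matrix ι ι R)}
    (h : ∀ a b, a ≠ b → Matrix.single a b (1 : R) ∈ L) : sl ι R ≤ L := by
  intro X hX
  have htr : X.trace = 0 := hX
  rcases isEmpty_or_nonempty ι with _ | ⟨⟨a₀⟩⟩
  · simp [Subsingleton.elim X 0]
  have hdiag : ∀ a, Matrix.single a a (1 : R) - Matrix.single a₀ a₀ 1 ∈ L := fun a => by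
    rcases eq_or_ne a a₀ with rfl | ha
    · simp
    · simpa [lie_single_single_swap] using L.lie_mem (h a a₀ ha) (h a₀ a ha.symm)
  have hX : X = ∑ p, ∑ q,
      X p q • (Matrix.single p q (1 : R) - if p = q then Matrix.single a₀ a₀ 1 else 0) := by
    simp only [smul_sub, Finset.sum_sub_distrib, smul_ite, smul_zero, Finset.sum_ite_eq,
      Finset.mem_univ, if_true, ← Finset.sum_smul]
    have hdiag_sum : ∑ p, X p p = 0 := htr
    simp [hdiag_sum, ← matrix_eq_sum_single]
  rw [hX]
  refine L.toSubmodule.sum_mem fun p _ => L.toSubmodule.sum_mem fun q _ =>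
    L.toSubmodule.smul_mem _ ?_
  split_ifs with hpq
  · exact hpq ▸ hdiag p
  · simpa using h p q hpq

section Chevalley

variable {R : Type*} [CommRing R] {m : ℕ}
  {L : LieSubalgebra R (Matrix (Fin (m + 1)) (Fin (m + 1)) R)}

theorem single_mem_of_lt (he : ∀ i : Fin m, Matrix.single i.castSucc i.succ (1 : R) ∈ L)
    {a b : Fin (m + 1)} (hab : a < b) : Matrix.single a b (1 : R) ∈ L := by
  induction b using Fin.induction with
  | zero => exact absurd hab (Fin.not_lt_zero a)
  | succ b ih =>
    rcases (Fin.le_castSucc_iff.mpr hab).eq_or_lt with rfl | hlt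
    · exact he b
    · simpa [lie_single_single_of_ne _ _ _ (hlt.trans Fin.castSucc_lt_succ).ne] using
        L.lie_mem (ih hlt) (he b)

theorem single_mem_of_ne (he : ∀ i : Fin m, Matrix.single i.castSucc i.succ (1 : R) ∈ L)
    (hf : Matrix.single (Fin.last m) 0 (1 : R) ∈ L) {a b : Fin (m + 1)} (hab : a ≠ b) :
    Matrix.single a b (1 : R) ∈ L := by
  rcases hab.lt_or_gt with hlt | hgt
  · exact single_mem_of_lt he hlt
  have hcol : ∀ c : Fin (m + 1), c ≠ 0 → Matrix.single c 0 (1 : R) ∈ L := fun c hc => by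
    rcases (Fin.le_last c).eq_or_lt with rfl | hc'
    · exact hf
    · simpa [lie_single_single_of_ne _ _ _ hc] using L.lie_mem (single_mem_of_lt he hc') hf
  rcases eq_or_ne b 0 with rfl | hb
  · exact hcol a hab
  · have hb0 : 0 < b := Fin.pos_of_ne_zero hb
    simpa [lie_single_single_of_ne _ _ _ hab] using
      L.lie_mem (hcol a (hb0.trans hgt).ne') (single_mem_of_lt he hb0)

theorem sl_le_of_chevalley_mem (he : ∀ i : Fin m, Matrix.single i.castSucc i.succ (1 : R) ∈ L)
    (hf : Matrix.single (Fin.last m) 0 (1 : R) ∈ L) : sl (Fin (m + 1)) R ≤ L :=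
  sl_le_of_single_mem fun _ _ => single_mem_of_ne he hf

end Chevalley

end LieAlgebra.SpecialLinear

namespace Matrix

variable {ι K : Type*} [Field K]

/-- `X ↦ -A Xᵀ A⁻¹` for the monomial matrix `A` with entries `A p (r p) = a p`. -/
def negTransposeTwist (r : ι → ι) (a : ι → K) : Matrix ι ι K →ₗ[K] Matrix ι ι K where
  toFun X := of fun p q => -(a p / a q) * X (r q) (r p)
  map_add' X Y := by ext; simp [mul_add]
  map_smul' c X := by ext; simp only [of_apply, smul_apply, smul_eq_mul, RingHom.id_apply]; ring

@[simp]
theorem negTransposeTwist_apply (r : ι → ι) (a : ι → K) (X : Matrix ι ι K) (p q : ι) :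
    negTransposeTwist r a X p q = -(a p / a q) * X (r q) (r p) :=
  rfl

variable {r : ι → ι} {a : ι → K}

theorem negTransposeTwist_lie [Fintype ι] (hr : Function.Involutive r) (ha : ∀ p, a p ≠ 0)
    (X Y : Matrix ι ι K) :
    negTransposeTwist r a ⁅X, Y⁆ = ⁅negTransposeTwist r a X, negTransposeTwist r a Y⁆ := by
  have hmul : ∀ (U V : Matrix ι ι K) (p q : ι),
      (negTransposeTwist r a U * negTransposeTwist r a V) p q =
        a p / a q * (V * U) (r q) (r p) := by
    intro U V p q
    rw [mul_apply, mul_apply, ← Equiv.sum_comp (hr.toPerm r), Finset.mul_sum]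
    refine Finset.sum_congr rfl fun k _ => ?_
    simp only [negTransposeTwist_apply, Function.Involutive.coe_toPerm, hr k]
    field_simp [ha]
  ext p q
  simp only [Ring.lie_def, sub_apply, hmul, negTransposeTwist_apply]
  ring

theorem trace_negTransposeTwist [Fintype ι] (hr : Function.Involutive r) (ha : ∀ p, a p ≠ 0)
    (X : Matrix ι ι K) : (negTransposeTwist r a X).trace = -X.trace := by
  simp only [trace, diag, negTransposeTwist_apply, div_self (ha _), neg_one_mul,
    Finset.sum_neg_distrib]
  exact congrArg Neg.neg (Equiv.sum_comp (hr.toPerm r) fun i => X i i)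

theorem negTransposeTwist_single [DecidableEq ι] (hr : Function.Involutive r) (i j : ι) (c : K) :
    negTransposeTwist r a (single i j c) = single (r j) (r i) (-(a (r j) / a (r i)) * c) := by
  ext p q
  simp only [negTransposeTwist_apply, single_apply, hr.eq_iff, eq_comm (a := i),
    eq_comm (a := j), and_comm (a := q = r i)]
  split_ifs with h
  · rw [h.1, h.2]
  · rw [mul_zero]

theorem negTransposeTwist_negTransposeTwist_apply (hr : Function.Involutive r)
    (ha : ∀ p, a p ≠ 0) (X : Matrix ι ι K) (p q : ι) :
    negTransposeTwist r a (negTransposeTwist r a X) p q =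
      a p * a (r q) / (a q * a (r p)) * X p q := by
  simp only [negTransposeTwist_apply, hr p, hr q]
  field_simp [ha]

theorem trace_eq_zero_of_negTransposeTwist_eq_smul [Fintype ι] (hr : Function.Involutive r)
    (ha : ∀ p, a p ≠ 0) {X : Matrix ι ι K} {c : K} (hc : c ≠ -1)
    (h : negTransposeTwist r a X = c • X) : X.trace = 0 := by
  have := trace_negTransposeTwist hr ha X
  rw [h, trace_smul, smul_eq_mul] at this
  have : (c + 1) * X.trace = 0 := by linear_combination this
  exact (mul_eq_zero.mp this).resolve_left (by contrapose! hc; linear_combination hc)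

theorem mem_sp_iff_negTransposeTwist {l : Type*} [Fintype l] [DecidableEq l]
    (Y : Matrix (l ⊕ l) (l ⊕ l) K) :
    Y ∈ LieAlgebra.Symplectic.sp l K ↔
      negTransposeTwist Sum.swap (Sum.elim (fun _ => 1) (fun _ => -1)) Y = Y := by
  rw [LieAlgebra.Symplectic.sp, mem_skewAdjointMatricesLieSubalgebra,
    mem_skewAdjointMatricesSubmodule, Matrix.IsSkewAdjoint, Matrix.IsAdjointPair,
    ← Matrix.ext_iff, ← Matrix.ext_iff]
  simp [Sum.forall, J, mul_apply, Fintype.sum_sum_type, one_apply]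
  grind

end Matrix

theorem Module.End.add_inv_smul_mem_eigenspace {K V : Type*} [Field K] [AddCommGroup V]
    [Module K V] {f : Module.End K V} {c : K} (hc : c ^ 2 = -1) {z : V} (hz : f (f z) = -z) :
    z + c⁻¹ • f z ∈ f.eigenspace c := by
  have hinv : c⁻¹ = -c := inv_eq_of_mul_eq_one_right (by linear_combination -hc)
  rw [mem_eigenspace_iff, map_add, map_smul, hz, hinv, smul_add, smul_smul,
    show c * -c = 1 by linear_combination -hc, one_smul, smul_neg, neg_smul, neg_neg, add_comm]

namespace SlOdd

noncomputable def weight (n k : ℕ) : ℂ :=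
  if k < n then (-1) ^ k else if k = n then -I * (-1) ^ n else -(-1) ^ (2 * n - k)

variable {n : ℕ}

theorem weight_ne_zero (k : ℕ) : weight n k ≠ 0 := by
  unfold weight; split_ifs <;> simp [I_ne_zero]

theorem weight_two_mul_sub {k : ℕ} (hk : k ≤ 2 * n) (hkn : k ≠ n) :
    weight n (2 * n - k) = -weight n k := by
  unfold weight
  split_ifs <;> first | omega | simp [Nat.sub_sub_self hk]

theorem neg_weight_div_weight_succ {k : ℕ} (hk : k < 2 * n) :
    -(weight n k / weight n (k + 1)) = if k = n - 1 ∨ k = n then I else 1 := by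
  unfold weight
  rcases lt_trichotomy (k + 1) n with h | rfl | h
  · rw [if_pos (by omega), if_pos h, if_neg (by omega), pow_succ]
    field_simp
  · rw [if_pos (by omega), if_neg (by omega), if_pos rfl, if_pos (by omega), pow_succ]
    field_simp
    ring_nf
    simp [I_sq]
  rcases eq_or_ne k n with rfl | hne
  · obtain ⟨j, rfl⟩ : ∃ j, k = j + 1 := ⟨k - 1, by omega⟩
    rw [if_neg (by omega), if_pos rfl, if_neg (by omega), if_neg (by omega), if_pos (by omega),
      show 2 * (j + 1) - (j + 1 + 1) = j by omega, pow_succ]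
    field_simp
  · obtain ⟨j, hj⟩ : ∃ j, 2 * n - k = j + 1 := ⟨2 * n - k - 1, by omega⟩
    rw [if_neg (by omega), if_neg (by omega), if_neg (by omega), if_neg (by omega),
      if_neg (by omega), show 2 * n - (k + 1) = j by omega, hj, pow_succ]
    field_simp

variable (n) in
noncomputable abbrev twist : Module.End ℂ (Matrix (Fin (2 * n + 1)) (Fin (2 * n + 1)) ℂ) :=
  negTransposeTwist Fin.rev fun p => weight n p

theorem twist_single_castSucc_succ (i : Fin (2 * n)) :
    twist n (single i.castSucc i.succ 1) =
      (if (i : ℕ) = n - 1 ∨ (i : ℕ) = n then I else 1) • single i.rev.castSucc i.rev.succ 1 := by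
  have hrev : ((i.rev : ℕ) = n - 1 ∨ (i.rev : ℕ) = n) ↔ ((i : ℕ) = n - 1 ∨ (i : ℕ) = n) := by
    rw [Fin.val_rev]; omega
  rw [negTransposeTwist_single Fin.rev_involutive, Fin.rev_succ, Fin.rev_castSucc, smul_single,
    smul_eq_mul, mul_one, mul_one, Fin.val_castSucc, Fin.val_succ,
    neg_weight_div_weight_succ (by omega), if_congr hrev rfl rfl]

theorem twist_single_last_zero (hn : 0 < n) :
    twist n (single (Fin.last (2 * n)) 0 1) = single (Fin.last (2 * n)) 0 1 := by
  rw [negTransposeTwist_single Fin.rev_involutive, Fin.rev_zero, Fin.rev_last]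
  simp [weight, hn, show 2 * n ≠ n by omega]

theorem eq_twist_of_chevalley (hn : 0 < n)
    {σ : Module.End ℂ (Matrix (Fin (2 * n + 1)) (Fin (2 * n + 1)) ℂ)}
    (hσlie : ∀ X Y, X.trace = 0 → Y.trace = 0 → σ ⁅X, Y⁆ = ⁅σ X, σ Y⁆)
    (hσe : ∀ i : Fin (2 * n), σ (single i.castSucc i.succ (1 : ℂ)) =
      (if (i : ℕ) = n - 1 ∨ (i : ℕ) = n then I else 1) • single i.rev.castSucc i.rev.succ 1)
    (hσf : σ (single (Fin.last (2 * n)) 0 (1 : ℂ)) = single (Fin.last (2 * n)) 0 1)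
    {X : Matrix (Fin (2 * n + 1)) (Fin (2 * n + 1)) ℂ} (hX : X.trace = 0) :
    σ X = twist n X := by
  let S : LieSubalgebra ℂ (Matrix (Fin (2 * n + 1)) (Fin (2 * n + 1)) ℂ) :=
    { carrier := {X | X.trace = 0 ∧ σ X = twist n X}
      add_mem' := fun hX hY => ⟨by simp [hX.1, hY.1], by simp [hX.2, hY.2]⟩
      zero_mem' := ⟨by simp, by simp⟩
      smul_mem' := fun c _ hX => ⟨by simp [hX.1], by simp [hX.2]⟩
      lie_mem' := fun hX hY => ⟨LieAlgebra.matrix_trace_commutator_zero _ _ _ _,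
        by rw [hσlie _ _ hX.1 hY.1, hX.2, hY.2,
          negTransposeTwist_lie Fin.rev_involutive fun p => weight_ne_zero _]⟩ }
  have he : ∀ i : Fin (2 * n), single i.castSucc i.succ (1 : ℂ) ∈ S := fun i =>
    ⟨trace_single_eq_of_ne _ _ _ (Fin.castSucc_lt_succ).ne, by
      rw [hσe, twist_single_castSucc_succ]⟩
  have hf : single (Fin.last (2 * n)) 0 (1 : ℂ) ∈ S :=
    ⟨trace_single_eq_of_ne _ _ _ (by rw [Ne, Fin.ext_iff, Fin.val_last, Fin.val_zero]; omega), by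
      rw [hσf, twist_single_last_zero hn]⟩
  exact (LieAlgebra.SpecialLinear.sl_le_of_chevalley_mem he hf hX).2

variable (n) in
def mid : Fin (2 * n + 1) := ⟨n, by omega⟩

theorem rev_mid : (mid n).rev = mid n := by
  ext; simp only [mid, Fin.val_rev]; omega

theorem weight_rev (p : Fin (2 * n + 1)) :
    weight n p.rev = if p = mid n then weight n p else -weight n p := by
  split_ifs with hp
  · rw [hp, rev_mid]
  · rw [Fin.val_rev, show 2 * n + 1 - (p + 1) = 2 * n - p by omega,
      weight_two_mul_sub (n := n) (by omega) fun h => hp (Fin.ext h)]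

theorem twist_twist_apply (X : Matrix (Fin (2 * n + 1)) (Fin (2 * n + 1)) ℂ)
    (p q : Fin (2 * n + 1)) :
    twist n (twist n X) p q = (if p = mid n ↔ q = mid n then 1 else -1) * X p q := by
  rw [negTransposeTwist_negTransposeTwist_apply Fin.rev_involutive fun _ => weight_ne_zero _,
    weight_rev, weight_rev]
  have hp := weight_ne_zero (n := n) p
  have hq := weight_ne_zero (n := n) q
  split_ifs <;> first | tauto | field_simp

theorem apply_eq_zero_of_twist_eq_smul {X : Matrix (Fin (2 * n + 1)) (Fin (2 * n + 1)) ℂ}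
    {c : ℂ} (h : twist n X = c • X) {p q : Fin (2 * n + 1)}
    (hpq : c ^ 2 ≠ if p = mid n ↔ q = mid n then 1 else -1) : X p q = 0 := by
  have h2 := twist_twist_apply X p q
  rw [h, map_smul, h, smul_smul, Matrix.smul_apply, smul_eq_mul, ← sq] at h2
  exact (mul_eq_zero.mp (by linear_combination h2)).resolve_left (sub_ne_zero.mpr hpq)

variable (n) in
def emb : Fin n ⊕ Fin n → Fin (2 * n + 1) :=
  Sum.elim (fun i => ⟨i, by omega⟩) (fun i => ⟨2 * n - i, by omega⟩)

variable (n) in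
def blockEquiv : Unit ⊕ (Fin n ⊕ Fin n) ≃ Fin (2 * n + 1) where
  toFun := Sum.elim (fun _ => mid n) (emb n)
  invFun p :=
    if h : (p : ℕ) < n then .inr (.inl ⟨p, h⟩)
    else if h' : n < p then .inr (.inr ⟨2 * n - p, by omega⟩) else .inl ()
  left_inv := by
    rintro (⟨⟩ | i | i)
    · simp [mid]
    · simp [emb]
    · have hi := i.isLt
      simp [emb, show ¬2 * n - (i : ℕ) < n by omega, show n < 2 * n - (i : ℕ) by omega,
        Nat.sub_sub_self (show (i : ℕ) ≤ 2 * n by omega)]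
  right_inv p := by
    by_cases h : (p : ℕ) < n
    · simp [h, emb]
    by_cases h' : n < (p : ℕ)
    · simp only [h, h', dite_false, dite_true, emb, Sum.elim_inr, Fin.ext_iff]; omega
    · simp only [h, h', dite_false, mid, Sum.elim_inl, Fin.ext_iff]; omega

@[simp]
theorem blockEquiv_inl (u : Unit) : blockEquiv n (.inl u) = mid n := rfl

@[simp]
theorem blockEquiv_inr (I : Fin n ⊕ Fin n) : blockEquiv n (.inr I) = emb n I := rfl

@[simp]
theorem blockEquiv_symm_mid : (blockEquiv n).symm (mid n) = .inl () := by
  rw [← blockEquiv_inl (), Equiv.symm_apply_apply]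

@[simp]
theorem blockEquiv_symm_emb (I : Fin n ⊕ Fin n) : (blockEquiv n).symm (emb n I) = .inr I := by
  rw [← blockEquiv_inr, Equiv.symm_apply_apply]

@[simp]
theorem emb_ne_mid (I : Fin n ⊕ Fin n) : emb n I ≠ mid n := by
  rw [← blockEquiv_inr, ← blockEquiv_inl (), Ne, (blockEquiv n).apply_eq_iff_eq]
  exact Sum.inr_ne_inl

@[simp]
theorem rev_emb (I : Fin n ⊕ Fin n) : (emb n I).rev = emb n I.swap := by
  rcases I with i | i <;> ext <;>
    simp only [emb, Sum.elim_inl, Sum.elim_inr, Sum.swap_inl, Sum.swap_inr, Fin.val_rev] <;> omega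

theorem sum_eq_mid_add_sum_emb (f : Fin (2 * n + 1) → ℂ) :
    ∑ p, f p = f (mid n) + ∑ I, f (emb n I) := by
  simp [← (blockEquiv n).sum_comp, Fintype.sum_sum_type]

variable (n) in
/-- The diagonal change of basis taking the outer part of the form to the standard `J`. -/
def sign : Fin n ⊕ Fin n → ℂ := Sum.elim (fun i => (-1) ^ (i : ℕ)) fun _ => 1

@[simp]
theorem sign_mul_self (I : Fin n ⊕ Fin n) : sign n I * sign n I = 1 := by
  rcases I with i | i <;> simp [sign, ← pow_add, ← two_mul, pow_mul]

theorem sign_ne_zero (I : Fin n ⊕ Fin n) : sign n I ≠ 0 :=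
  left_ne_zero_of_mul_eq_one (sign_mul_self I)

theorem weight_emb (I : Fin n ⊕ Fin n) :
    weight n (emb n I) = Sum.elim (fun _ => 1) (fun _ => -1) I * sign n I * sign n I.swap := by
  rcases I with i | i
  · simp [weight, emb, sign]
  · have hi := i.isLt
    simp [weight, emb, sign, show ¬ 2 * n - (i : ℕ) < n by omega,
      show 2 * n - (i : ℕ) ≠ n by omega, Nat.sub_sub_self (show (i : ℕ) ≤ 2 * n by omega)]

variable (n) in
noncomputable def toSp : Matrix (Fin (2 * n + 1)) (Fin (2 * n + 1)) ℂ →ₗ[ℂ]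
    Matrix (Fin n ⊕ Fin n) (Fin n ⊕ Fin n) ℂ where
  toFun X := of fun I J => sign n I * X (emb n I) (emb n J) * sign n J
  map_add' X Y := by ext; simp; ring
  map_smul' c X := by ext; simp; ring

@[simp]
theorem toSp_apply (X : Matrix (Fin (2 * n + 1)) (Fin (2 * n + 1)) ℂ) (I J : Fin n ⊕ Fin n) :
    toSp n X I J = sign n I * X (emb n I) (emb n J) * sign n J := rfl

theorem toSp_twist (X : Matrix (Fin (2 * n + 1)) (Fin (2 * n + 1)) ℂ) :
    toSp n (twist n X) =
      negTransposeTwist Sum.swap (Sum.elim (fun _ => 1) (fun _ => -1)) (toSp n X) := by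
  ext I J
  simp only [toSp_apply, negTransposeTwist_apply, rev_emb, weight_emb]
  rcases I with i | i <;> rcases J with j | j <;>
    simp only [sign, Sum.elim_inl, Sum.elim_inr, Sum.swap_inl, Sum.swap_inr] <;> field_simp <;>
    ring_nf <;> simp [pow_mul']

theorem apply_eq_zero_of_twist_eq_self {X : Matrix (Fin (2 * n + 1)) (Fin (2 * n + 1)) ℂ}
    (h : twist n X = X) {p q : Fin (2 * n + 1)} (hpq : p = mid n ∨ q = mid n) : X p q = 0 := by
  by_cases hmid : p = mid n ∧ q = mid n
  · obtain ⟨rfl, rfl⟩ := hmid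
    have hdiag := congr_fun (congr_fun h (mid n)) (mid n)
    rw [negTransposeTwist_apply, rev_mid, div_self (weight_ne_zero _)] at hdiag
    linear_combination -hdiag / 2
  · refine apply_eq_zero_of_twist_eq_smul (c := 1) (by rwa [one_smul]) ?_
    rw [if_neg (by tauto)]
    norm_num

theorem eq_zero_of_toSp_eq_zero {X : Matrix (Fin (2 * n + 1)) (Fin (2 * n + 1)) ℂ}
    (hmid : ∀ p q, p = mid n ∨ q = mid n → X p q = 0) (h : toSp n X = 0) : X = 0 := by
  ext p q
  obtain ⟨x, rfl⟩ := (blockEquiv n).surjective p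
  obtain ⟨y, rfl⟩ := (blockEquiv n).surjective q
  rcases x with ⟨⟩ | I
  · exact hmid _ _ (.inl rfl)
  rcases y with ⟨⟩ | J
  · exact hmid _ _ (.inr rfl)
  have hIJ := congr_fun (congr_fun h I) J
  simpa [sign_ne_zero] using hIJ

variable (n) in
noncomputable def ofSp (W : Matrix (Fin n ⊕ Fin n) (Fin n ⊕ Fin n) ℂ) :
    Matrix (Fin (2 * n + 1)) (Fin (2 * n + 1)) ℂ :=
  reindex (blockEquiv n) (blockEquiv n)
    (fromBlocks 0 0 0 (of fun I J => sign n I * W I J * sign n J))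

theorem ofSp_apply_eq_zero (W : Matrix (Fin n ⊕ Fin n) (Fin n ⊕ Fin n) ℂ) {p q : Fin (2 * n + 1)}
    (hpq : p = mid n ∨ q = mid n) : ofSp n W p q = 0 := by
  obtain ⟨x, rfl⟩ := (blockEquiv n).surjective p
  obtain ⟨y, rfl⟩ := (blockEquiv n).surjective q
  rcases x with ⟨⟩ | I <;> rcases y with ⟨⟩ | J <;> simp_all [ofSp]

theorem toSp_ofSp (W : Matrix (Fin n ⊕ Fin n) (Fin n ⊕ Fin n) ℂ) : toSp n (ofSp n W) = W := by
  ext I J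
  simp only [toSp_apply, ofSp, reindex_apply, submatrix_apply, blockEquiv_symm_emb,
    fromBlocks_apply₂₂, of_apply]
  linear_combination W I J * sign n J * sign n J * sign_mul_self I + W I J * sign_mul_self J

theorem toSp_image :
    toSp n '' ((twist n).eigenspace 1) = LieAlgebra.Symplectic.sp (Fin n) ℂ := by
  ext W
  constructor
  · rintro ⟨X, hX, rfl⟩
    rw [SetLike.mem_coe, Module.End.mem_eigenspace_iff, one_smul] at hX
    rw [SetLike.mem_coe, mem_sp_iff_negTransposeTwist, ← toSp_twist, hX]
  · intro hW
    refine ⟨ofSp n W, ?_, toSp_ofSp W⟩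
    rw [SetLike.mem_coe, Module.End.mem_eigenspace_iff, one_smul, ← sub_eq_zero]
    refine eq_zero_of_toSp_eq_zero (fun p q hpq => ?_) ?_
    · have hrev : q.rev = mid n ∨ p.rev = mid n := by
        rcases hpq with rfl | rfl <;> simp [rev_mid]
      simp [ofSp_apply_eq_zero W hpq, ofSp_apply_eq_zero W hrev]
    · rw [map_sub, toSp_twist, toSp_ofSp, (mem_sp_iff_negTransposeTwist W).1 hW, sub_self]

theorem toSp_injOn : Set.InjOn (toSp n) ((twist n).eigenspace 1) := by
  refine LinearMap.injOn_of_disjoint_ker subset_rfl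
    (Submodule.disjoint_def.mpr fun X hX hker => ?_)
  rw [Module.End.mem_eigenspace_iff, one_smul] at hX
  exact eq_zero_of_toSp_eq_zero (fun _ _ => apply_eq_zero_of_twist_eq_self hX) hker

theorem toSp_mul {U V : Matrix (Fin (2 * n + 1)) (Fin (2 * n + 1)) ℂ}
    (hU : ∀ p, U p (mid n) = 0) : toSp n (U * V) = toSp n U * toSp n V := by
  ext I J
  simp only [toSp_apply, mul_apply, sum_eq_mid_add_sum_emb, hU, zero_mul, zero_add,
    Finset.mul_sum, Finset.sum_mul]
  refine Finset.sum_congr rfl fun K _ => ?_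
  linear_combination -(sign n I * U (emb n I) (emb n K) * V (emb n K) (emb n J) * sign n J) *
    sign_mul_self K

theorem toSp_lie {X Y : Matrix (Fin (2 * n + 1)) (Fin (2 * n + 1)) ℂ} (hX : twist n X = X)
    (hY : twist n Y = Y) : toSp n ⁅X, Y⁆ = ⁅toSp n X, toSp n Y⁆ := by
  rw [Ring.lie_def, Ring.lie_def, map_sub,
    toSp_mul fun _ => apply_eq_zero_of_twist_eq_self hX (.inr rfl),
    toSp_mul fun _ => apply_eq_zero_of_twist_eq_self hY (.inr rfl)]

variable (n) in
noncomputable def toStd :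
    Matrix (Fin (2 * n + 1)) (Fin (2 * n + 1)) ℂ →ₗ[ℂ] (Fin n ⊕ Fin n → ℂ) where
  toFun X I := sign n I * X (emb n I) (mid n)
  map_add' X Y := by ext; simp; ring
  map_smul' c X := by ext; simp; ring

@[simp]
theorem toStd_apply (X : Matrix (Fin (2 * n + 1)) (Fin (2 * n + 1)) ℂ) (I : Fin n ⊕ Fin n) :
    toStd n X I = sign n I * X (emb n I) (mid n) := rfl

theorem toStd_lie {X : Matrix (Fin (2 * n + 1)) (Fin (2 * n + 1)) ℂ} (hX : twist n X = X)
    (Y : Matrix (Fin (2 * n + 1)) (Fin (2 * n + 1)) ℂ) :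
    toStd n ⁅X, Y⁆ = toSp n X *ᵥ toStd n Y := by
  have hcol : ∀ p, X p (mid n) = 0 := fun _ => apply_eq_zero_of_twist_eq_self hX (.inr rfl)
  ext I
  rw [Ring.lie_def]
  simp only [toStd_apply, Matrix.sub_apply, mul_apply, hcol, mul_zero,
    Finset.sum_const_zero, sub_zero, mulVec, dotProduct, toSp_apply]
  rw [sum_eq_mid_add_sum_emb, hcol, zero_mul, zero_add, Finset.mul_sum]
  refine Finset.sum_congr rfl fun K _ => ?_
  linear_combination -(sign n I * X (emb n I) (emb n K) * Y (emb n K) (mid n)) * sign_mul_self K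

variable (n) in
noncomputable def ofStd (v : Fin n ⊕ Fin n → ℂ) :
    Matrix (Fin (2 * n + 1)) (Fin (2 * n + 1)) ℂ :=
  reindex (blockEquiv n) (blockEquiv n) (fromBlocks 0 0 (of fun I _ => sign n I * v I) 0)

theorem ofStd_apply_eq_zero (v : Fin n ⊕ Fin n → ℂ) {p q : Fin (2 * n + 1)}
    (hpq : p = mid n ∨ q ≠ mid n) : ofStd n v p q = 0 := by
  obtain ⟨x, rfl⟩ := (blockEquiv n).surjective p
  obtain ⟨y, rfl⟩ := (blockEquiv n).surjective q
  rcases x with ⟨⟩ | I <;> rcases y with ⟨⟩ | J <;> simp_all [ofStd]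

theorem toStd_ofStd (v : Fin n ⊕ Fin n → ℂ) : toStd n (ofStd n v) = v := by
  ext I
  simp only [toStd_apply, ofStd, reindex_apply, submatrix_apply, blockEquiv_symm_emb,
    blockEquiv_symm_mid, fromBlocks_apply₂₁, of_apply]
  linear_combination v I * sign_mul_self I

theorem toStd_twist_ofStd (v : Fin n ⊕ Fin n → ℂ) : toStd n (twist n (ofStd n v)) = 0 := by
  ext I
  simp [rev_mid, ofStd_apply_eq_zero v (.inl rfl)]

theorem twist_twist_ofStd (v : Fin n ⊕ Fin n → ℂ) :
    twist n (twist n (ofStd n v)) = -ofStd n v := by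
  ext p q
  rw [twist_twist_apply, neg_apply]
  by_cases hpq : p = mid n ↔ q = mid n
  · rw [if_pos hpq, ofStd_apply_eq_zero v (by tauto), neg_zero, mul_zero]
  · simp [hpq]

theorem toStd_image {c : ℂ} (hc : c ^ 2 = -1) :
    toStd n '' ((twist n).eigenspace c) = Set.univ := by
  refine Set.eq_univ_of_forall fun v => ⟨ofStd n v + c⁻¹ • twist n (ofStd n v),
    Module.End.add_inv_smul_mem_eigenspace hc (twist_twist_ofStd v), ?_⟩
  rw [map_add, map_smul, toStd_ofStd, toStd_twist_ofStd, smul_zero, add_zero]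

theorem toStd_injOn {c : ℂ} (hc : c ^ 2 = -1) :
    Set.InjOn (toStd n) ((twist n).eigenspace c) := by
  refine LinearMap.injOn_of_disjoint_ker subset_rfl
    (Submodule.disjoint_def.mpr fun Y hY hker => ?_)
  rw [Module.End.mem_eigenspace_iff] at hY
  have hc0 : c ≠ 0 := by rintro rfl; norm_num at hc
  have hoff : ∀ {p q}, (p = mid n ↔ q = mid n) → Y p q = 0 := fun hpq =>
    apply_eq_zero_of_twist_eq_smul hY (by rw [if_pos hpq, hc]; norm_num)
  have hcol : ∀ I, Y (emb n I) (mid n) = 0 := fun I => by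
    simpa [sign_ne_zero] using congr_fun hker I
  ext p q
  obtain ⟨x, rfl⟩ := (blockEquiv n).surjective p
  obtain ⟨y, rfl⟩ := (blockEquiv n).surjective q
  rcases x with ⟨⟩ | I <;> rcases y with ⟨⟩ | J
  · exact hoff (iff_of_true rfl rfl)
  · have hrow := congr_fun (congr_fun hY (mid n)) (emb n J)
    rw [negTransposeTwist_apply, rev_emb, rev_mid, hcol, mul_zero, Matrix.smul_apply,
      smul_eq_mul] at hrow
    exact (mul_eq_zero.mp hrow.symm).resolve_left hc0
  · exact hcol I
  · exact hoff (iff_of_false (emb_ne_mid I) (emb_ne_mid J))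

end SlOdd

open SlOdd in
theorem stmt7_general (n : ℕ) (hn : 0 < n)
    (σ : Module.End ℂ (Matrix (Fin (2 * n + 1)) (Fin (2 * n + 1)) ℂ))
    (hσlie : ∀ X Y, X.trace = 0 → Y.trace = 0 → σ ⁅X, Y⁆ = ⁅σ X, σ Y⁆)
    (hσe : ∀ i : Fin (2 * n),
      σ (Matrix.single i.castSucc i.succ (1 : ℂ)) =
        (if (i : ℕ) = n - 1 ∨ (i : ℕ) = n then Complex.I else 1) •
          Matrix.single (i.rev.castSucc) (i.rev.succ) (1 : ℂ))
    (hσfθ : σ (Matrix.single (Fin.last (2 * n)) 0 (1 : ℂ)) =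
        Matrix.single (Fin.last (2 * n)) 0 (1 : ℂ)) :
    ∃ φ : Matrix (Fin (2 * n + 1)) (Fin (2 * n + 1)) ℂ →ₗ[ℂ]
        Matrix (Fin n ⊕ Fin n) (Fin n ⊕ Fin n) ℂ,
      Set.InjOn φ {X | σ X = X ∧ X.trace = 0} ∧
      φ '' {X | σ X = X ∧ X.trace = 0}
        = ((LieAlgebra.Symplectic.sp (Fin n) ℂ :
            LieSubalgebra ℂ (Matrix (Fin n ⊕ Fin n) (Fin n ⊕ Fin n) ℂ)) : Set _) ∧
      (∀ X ∈ {X | σ X = X ∧ X.trace = 0}, ∀ Y ∈ {X | σ X = X ∧ X.trace = 0},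
        φ ⁅X, Y⁆ = ⁅φ X, φ Y⁆) ∧
      (∃ ψ : Matrix (Fin (2 * n + 1)) (Fin (2 * n + 1)) ℂ →ₗ[ℂ] ((Fin n ⊕ Fin n) → ℂ),
        Set.InjOn ψ {X | σ X = Complex.I • X ∧ X.trace = 0} ∧
        ψ '' {X | σ X = Complex.I • X ∧ X.trace = 0} = Set.univ ∧
        ∀ X ∈ {X | σ X = X ∧ X.trace = 0}, ∀ Y ∈ {X | σ X = Complex.I • X ∧ X.trace = 0},
          ψ ⁅X, Y⁆ = (φ X).mulVec (ψ Y)) ∧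
      (∃ ψ : Matrix (Fin (2 * n + 1)) (Fin (2 * n + 1)) ℂ →ₗ[ℂ] ((Fin n ⊕ Fin n) → ℂ),
        Set.InjOn ψ {X | σ X = -(Complex.I • X) ∧ X.trace = 0} ∧
        ψ '' {X | σ X = -(Complex.I • X) ∧ X.trace = 0} = Set.univ ∧
        ∀ X ∈ {X | σ X = X ∧ X.trace = 0},
          ∀ Y ∈ {X | σ X = -(Complex.I • X) ∧ X.trace = 0},
          ψ ⁅X, Y⁆ = (φ X).mulVec (ψ Y)) := by
  have hσT : ∀ X, X.trace = 0 → σ X = twist n X := fun _ =>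
    eq_twist_of_chevalley hn hσlie hσe hσfθ
  have heig : ∀ c : ℂ, c ≠ -1 →
      {X | σ X = c • X ∧ X.trace = 0} = ((twist n).eigenspace c : Set _) := by
    intro c hc
    ext X
    rw [Set.mem_ofPred_eq, SetLike.mem_coe, Module.End.mem_eigenspace_iff]
    refine ⟨fun ⟨h, htr⟩ => hσT X htr ▸ h, fun h => ?_⟩
    have htr := trace_eq_zero_of_negTransposeTwist_eq_smul Fin.rev_involutive
      (fun _ => weight_ne_zero _) hc h
    exact ⟨(hσT X htr).trans h, htr⟩
  have hfix : {X | σ X = X ∧ X.trace = 0} = ((twist n).eigenspace 1 : Set _) := by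
    simpa using heig 1 (by norm_num)
  have hnegI : {X | σ X = -(I • X) ∧ X.trace = 0} = ((twist n).eigenspace (-I) : Set _) := by
    simpa using heig (-I) (by simp [Complex.ext_iff])
  have hfixed : ∀ X ∈ ((twist n).eigenspace 1 : Set _), twist n X = X := fun X hX => by
    simpa using hX
  rw [hfix, hnegI, heig I (by simp [Complex.ext_iff])]
  exact ⟨toSp n, toSp_injOn, toSp_image, fun X hX Y hY => toSp_lie (hfixed X hX) (hfixed Y hY),
    ⟨toStd n, toStd_injOn I_sq, toStd_image I_sq, fun X hX Y _ => toStd_lie (hfixed X hX) Y⟩,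
    ⟨toStd n, toStd_injOn (by simp), toStd_image (by simp),
      fun X hX Y _ => toStd_lie (hfixed X hX) Y⟩⟩

/-- `g = sl_{2n+1}(ℂ)` (realized as the traceless matrices inside
`M = Matrix (Fin (2n+1)) (Fin (2n+1)) ℂ`) with the order-4 special automorphism `σ`,
characterized on the Chevalley generators `e_i = E_{i,i+1}` by
`σ(e_i) = e_{τ(i)}` for `i ∉ {n, n+1}`, `σ(e_i) = √-1 · e_{τ(i)}` for `i ∈ {n, n+1}`
(1-indexed; `τ(i) = 2n+1-i`), and `σ(f_θ) = f_θ` for `f_θ = E_{2n+1,1}`.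
Conclusion: the fixed subalgebra `g^σ` is isomorphic (as a Lie algebra) to `sp_{2n}(ℂ)`,
and both eigenspaces `g₁` (eigenvalue `i`) and `g₃` (eigenvalue `-i`) are isomorphic, as
`g^σ`-modules, to the standard `2n`-dimensional representation of `sp_{2n}` — the module
structure being transported through the isomorphism `φ` with `sp`. -/
theorem stmt7 (n : ℕ) (hn : 0 < n)
    (σ : Module.End ℂ (Matrix (Fin (2 * n + 1)) (Fin (2 * n + 1)) ℂ))
    (hσtr : ∀ X, X.trace = 0 → (σ X).trace = 0)
    (hσlie : ∀ X Y, X.trace = 0 → Y.trace = 0 → σ ⁅X, Y⁆ = ⁅σ X, σ Y⁆)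
    (hσ4 : σ ^ 4 = 1)
    (hσe : ∀ i : Fin (2 * n),
      σ (Matrix.single i.castSucc i.succ (1 : ℂ)) =
        (if (i : ℕ) = n - 1 ∨ (i : ℕ) = n then Complex.I else 1) •
          Matrix.single (i.rev.castSucc) (i.rev.succ) (1 : ℂ))
    (hσfθ : σ (Matrix.single (Fin.last (2 * n)) 0 (1 : ℂ)) =
        Matrix.single (Fin.last (2 * n)) 0 (1 : ℂ)) :
    ∃ φ : Matrix (Fin (2 * n + 1)) (Fin (2 * n + 1)) ℂ →ₗ[ℂ]
        Matrix (Fin n ⊕ Fin n) (Fin n ⊕ Fin n) ℂ,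
      Set.InjOn φ {X | σ X = X ∧ X.trace = 0} ∧
      φ '' {X | σ X = X ∧ X.trace = 0}
        = ((LieAlgebra.Symplectic.sp (Fin n) ℂ :
            LieSubalgebra ℂ (Matrix (Fin n ⊕ Fin n) (Fin n ⊕ Fin n) ℂ)) : Set _) ∧
      (∀ X ∈ {X | σ X = X ∧ X.trace = 0}, ∀ Y ∈ {X | σ X = X ∧ X.trace = 0},
        φ ⁅X, Y⁆ = ⁅φ X, φ Y⁆) ∧
      (∃ ψ : Matrix (Fin (2 * n + 1)) (Fin (2 * n + 1)) ℂ →ₗ[ℂ] ((Fin n ⊕ Fin n) → ℂ),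
        Set.InjOn ψ {X | σ X = Complex.I • X ∧ X.trace = 0} ∧
        ψ '' {X | σ X = Complex.I • X ∧ X.trace = 0} = Set.univ ∧
        ∀ X ∈ {X | σ X = X ∧ X.trace = 0}, ∀ Y ∈ {X | σ X = Complex.I • X ∧ X.trace = 0},
          ψ ⁅X, Y⁆ = (φ X).mulVec (ψ Y)) ∧
      (∃ ψ : Matrix (Fin (2 * n + 1)) (Fin (2 * n + 1)) ℂ →ₗ[ℂ] ((Fin n ⊕ Fin n) → ℂ),
        Set.InjOn ψ {X | σ X = -(Complex.I • X) ∧ X.trace = 0} ∧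
        ψ '' {X | σ X = -(Complex.I • X) ∧ X.trace = 0} = Set.univ ∧
        ∀ X ∈ {X | σ X = X ∧ X.trace = 0},
          ∀ Y ∈ {X | σ X = -(Complex.I • X) ∧ X.trace = 0},
          ψ ⁅X, Y⁆ = (φ X).mulVec (ψ Y)) :=
  stmt7_general n hn σ hσlie hσe hσfθ
end

section
/- Let μ and γ be weights of a complex semisimple Lie algebra such that μ and μ+γ are dominant, and let θ be a dominant weight with 2ρ - θ dominant such that θ - γ is a nonnegative rational linear combination of positive roots and γ = -θ + β for β a nonnegative combination of positive roots. Then ⟨μ-θ, μ-θ+2ρ⟩ ≤ ⟨μ+γ, μ+γ+2ρ⟩ ≤ ⟨μ+θ, μ+θ+2ρ⟩, where ⟨·,·⟩ is a Weyl-group-invariant inner product on the weight space and ρ is half the sum of positive roots. -/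
open scoped RealInnerProductSpace

/-- `x` is a nonnegative linear combination of the elements of `P`. -/
def InPosCone {E : Type*} [NormedAddCommGroup E] [InnerProductSpace ℝ E]
    (P : Finset E) (x : E) : Prop :=
  ∃ c : E → ℝ, (∀ α, 0 ≤ c α) ∧ x = ∑ α ∈ P, c α • α

lemma inner_nonneg_of_inPosCone {E : Type*} [NormedAddCommGroup E] [InnerProductSpace ℝ E]
    (P : Finset E) (x y : E) (hx : ∀ α ∈ P, 0 ≤ ⟪x, α⟫) (hy : InPosCone P y) :
    0 ≤ ⟪x, y⟫ := by
  obtain ⟨c, hc, rfl⟩ := hy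
  rw [inner_sum]
  refine Finset.sum_nonneg fun α hα => ?_
  rw [real_inner_smul_right]
  exact mul_nonneg (hc α) (hx α hα)

lemma diff_identity {E : Type*} [NormedAddCommGroup E] [InnerProductSpace ℝ E]
    (a b ρ : E) :
    ⟪a, a + (2:ℝ) • ρ⟫ - ⟪b, b + (2:ℝ) • ρ⟫ = ⟪a + b + (2:ℝ) • ρ, a - b⟫ := by
  simp only [inner_add_left, inner_add_right, inner_sub_right, real_inner_smul_left,
    real_inner_smul_right, real_inner_comm a b, real_inner_comm ρ a, real_inner_comm ρ b]
  ring

/-- for dominant weights `μ` and `μ + γ` of a complex semisimple Lie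
algebra (dominance expressed via the Weyl-invariant inner product against the set `P` of
positive roots, with `ρ` the half sum of the positive roots), a dominant `θ` with
`2ρ - θ` dominant, `θ - γ` a nonnegative combination of positive roots, and
`γ = -θ + β` with `β = γ + θ` a nonnegative combination of positive roots:
`⟨μ-θ, μ-θ+2ρ⟩ ≤ ⟨μ+γ, μ+γ+2ρ⟩ ≤ ⟨μ+θ, μ+θ+2ρ⟩`. -/
theorem stmt12 {E : Type*} [NormedAddCommGroup E] [InnerProductSpace ℝ E]
    (P : Finset E) (ρ μ γ θ : E)
    (hρ : (2 : ℝ) • ρ = ∑ α ∈ P, α)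
    (hρdom : ∀ α ∈ P, 0 ≤ ⟪ρ, α⟫)
    (hμdom : ∀ α ∈ P, 0 ≤ ⟪μ, α⟫)
    (hμγdom : ∀ α ∈ P, 0 ≤ ⟪μ + γ, α⟫)
    (hθdom : ∀ α ∈ P, 0 ≤ ⟪θ, α⟫)
    (h2ρθdom : ∀ α ∈ P, 0 ≤ ⟪(2 : ℝ) • ρ - θ, α⟫)
    (hθγ : InPosCone P (θ - γ))
    (hγθ : InPosCone P (γ + θ)) :
    ⟪μ - θ, (μ - θ) + (2 : ℝ) • ρ⟫ ≤ ⟪μ + γ, (μ + γ) + (2 : ℝ) • ρ⟫ ∧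
      ⟪μ + γ, (μ + γ) + (2 : ℝ) • ρ⟫ ≤ ⟪μ + θ, (μ + θ) + (2 : ℝ) • ρ⟫ := by
  constructor
  · rw [← sub_nonneg, diff_identity]
    have h1 : (μ + γ) + (μ - θ) + (2:ℝ) • ρ = μ + (μ + γ) + ((2:ℝ) • ρ - θ) := by abel
    have h2 : (μ + γ) - (μ - θ) = γ + θ := by abel
    rw [h1, h2]
    refine inner_nonneg_of_inPosCone P _ _ (fun α hα => ?_) hγθ
    simp only [inner_add_left]
    have h3 := hμdom α hα
    have h4 := hμγdom α hα
    have h5 := h2ρθdom α hα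
    rw [inner_add_left] at h4
    linarith
  · rw [← sub_nonneg, diff_identity]
    have h1 : (μ + θ) + (μ + γ) + (2:ℝ) • ρ = μ + (μ + γ) + (θ + (2:ℝ) • ρ) := by abel
    have h2 : (μ + θ) - (μ + γ) = θ - γ := by abel
    rw [h1, h2]
    refine inner_nonneg_of_inPosCone P _ _ (fun α hα => ?_) hθγ
    simp only [inner_add_left, real_inner_smul_left]
    have h3 := hμdom α hα
    have h4 := hμγdom α hα
    have h5 := hθdom α hα
    have h6 := hρdom α hα
    rw [inner_add_left] at h4
    linarith
end

section
/- For z in the open unit disc, the coefficients a_k^n defined by a_k^n = (1/k)(1-|z|^{2k}) z^{n-k} for 1 ≤ k ≤ n and a_k^n = (1/k) z̄^{k-n}(1-|z|^{2n}) for k ≥ n satisfy the generating identity tⁿ - zⁿ = Σ_{k≥1} (k a_k^n/(1-|z|²)) t^{k-1}(t-z)(1-z̄t) as formal power series in t. -/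
/-!
Writing `w = z̄`, both branches of the definition collapse to the single formula
`k a_k^n / (1 - z w) = ∑_{i < min n k} z^{n-1-i} w^{k-1-i}`,
so `∑_k (k a_k^n / (1 - z w)) t^{k-1}` is the product of the polynomial
`∑_{i<n} z^{n-1-i} t^i` with the geometric series `∑_m (w t)^m = 1 / (1 - w t)`.
Multiplying by `(t - z)(1 - w t)` leaves `(∑_{i<n} t^i z^{n-1-i})(t - z) = tⁿ - zⁿ`.
-/

/-- The coefficients `a_k^n`: `a_k^n = (1/k)(1-|z|^{2k}) z^{n-k}` for `1 ≤ k ≤ n` and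
`a_k^n = (1/k) z̄^{k-n} (1-|z|^{2n})` for `k ≥ n` (with `a_0^n = 0`); note
`|z|^{2j} = (z z̄)^j`. -/
noncomputable def acoef (z : ℂ) (n k : ℕ) : ℂ :=
  if k = 0 then 0
  else if k ≤ n then (1 - (z * (starRingEnd ℂ) z) ^ k) * z ^ (n - k) / k
  else ((starRingEnd ℂ) z) ^ (k - n) * (1 - (z * (starRingEnd ℂ) z) ^ n) / k

open Finset ComplexConjugate

theorem sum_range_pow_mul_pow_eq_mul_geom_sum {R : Type*} [CommRing R] (x y : R)
    {m p q : ℕ} (hp : m ≤ p) (hq : m ≤ q) :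
    ∑ i ∈ range m, x ^ (p - 1 - i) * y ^ (q - 1 - i)
      = x ^ (p - m) * y ^ (q - m) * ∑ j ∈ range m, (x * y) ^ j := by
  rw [mul_sum, ← sum_range_reflect]
  refine sum_congr rfl fun j hj => ?_
  have hj : j < m := mem_range.mp hj
  rw [show p - 1 - (m - 1 - j) = p - m + j by omega,
    show q - 1 - (m - 1 - j) = q - m + j by omega, pow_add, pow_add, mul_pow]
  ring

theorem natCast_mul_acoef (z : ℂ) (n k : ℕ) :
    k * acoef z n k
      = (1 - z * conj z) * ∑ i ∈ range (min n k), z ^ (n - 1 - i) * conj z ^ (k - 1 - i) := by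
  rcases Nat.eq_zero_or_pos k with rfl | hk
  · simp [acoef]
  have hkC : (k : ℂ) ≠ 0 := Nat.cast_ne_zero.mpr hk.ne'
  rw [acoef, if_neg hk.ne']
  split_ifs with hkn <;> rw [mul_div_cancel₀ _ hkC]
  · rw [min_eq_right hkn, sum_range_pow_mul_pow_eq_mul_geom_sum _ _ hkn le_rfl,
      Nat.sub_self, pow_zero, ← mul_neg_geom_sum]
    ring
  · rw [min_eq_left (by omega), sum_range_pow_mul_pow_eq_mul_geom_sum _ _ le_rfl (by omega),
      Nat.sub_self, pow_zero, ← mul_neg_geom_sum]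
    ring

theorem hasSum_ite_lt_pow_mul_pow {𝕜 : Type*} [NormedField 𝕜] [CompleteSpace 𝕜] {x t : 𝕜}
    (h : ‖x * t‖ < 1) (i : ℕ) :
    HasSum (fun k : ℕ => if i < k then x ^ (k - 1 - i) * t ^ (k - 1) else 0)
      (t ^ i / (1 - x * t)) := by
  set f : ℕ → 𝕜 := fun k => if i < k then x ^ (k - 1 - i) * t ^ (k - 1) else 0
  have hshift : (fun m => f (m + (i + 1))) = fun m => t ^ i * (x * t) ^ m := by
    funext m
    simp only [f]
    rw [if_pos (by omega), show m + (i + 1) - 1 - i = m by omega,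
      show m + (i + 1) - 1 = m + i by omega, pow_add, mul_pow]
    ring
  have hvanish : ∑ k ∈ range (i + 1), f k = 0 :=
    sum_eq_zero fun k hk => if_neg (by have := mem_range.mp hk; omega)
  have := (hasSum_geometric_of_norm_lt_one h).mul_left (t ^ i)
  rwa [← hshift, hasSum_nat_add_iff, hvanish, add_zero, ← div_eq_mul_inv] at this

theorem norm_conj_mul_lt_one {z t : ℂ} (hz : ‖z‖ < 1) (ht : ‖t‖ < 1) : ‖conj z * t‖ < 1 := by
  rw [norm_mul, Complex.norm_conj]
  nlinarith [norm_nonneg z, norm_nonneg t]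

theorem hasSum_coef_mul_pow {z t : ℂ} (hz : ‖z‖ < 1) (ht : ‖t‖ < 1) (n : ℕ) :
    HasSum (fun k : ℕ => (k : ℂ) * acoef z n k / (1 - z * conj z) * t ^ (k - 1))
      ((∑ i ∈ range n, t ^ i * z ^ (n - 1 - i)) / (1 - conj z * t)) := by
  have hq : 1 - z * conj z ≠ 0 := by
    rw [mul_comm]
    exact (isUnit_one_sub_of_norm_lt_one (norm_conj_mul_lt_one hz hz)).ne_zero
  have hterm : ∀ k : ℕ, (k : ℂ) * acoef z n k / (1 - z * conj z) * t ^ (k - 1)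
      = ∑ i ∈ range n,
          z ^ (n - 1 - i) * if i < k then conj z ^ (k - 1 - i) * t ^ (k - 1) else 0 := by
    intro k
    have hrange : {i ∈ range n | i < k} = range (min n k) := by
      ext
      simp only [mem_filter, mem_range, lt_min_iff]
    rw [natCast_mul_acoef, mul_div_cancel_left₀ _ hq, sum_mul]
    simp only [mul_ite, mul_zero]
    rw [← sum_filter, hrange]
    exact sum_congr rfl fun i _ => by ring
  rw [funext hterm, sum_div]
  refine hasSum_sum fun i _ => ?_
  rw [mul_comm (t ^ i), mul_div_assoc]
  exact (hasSum_ite_lt_pow_mul_pow (norm_conj_mul_lt_one hz ht) i).mul_left _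

theorem stmt14_general (z : ℂ) (hz : ‖z‖ < 1) (n : ℕ) :
    ∀ t : ℂ, ‖t‖ < 1 →
      t ^ n - z ^ n
        = ∑' k : ℕ, (k : ℂ) * acoef z n k / (1 - z * (starRingEnd ℂ) z)
            * t ^ (k - 1) * (t - z) * (1 - (starRingEnd ℂ) z * t) := by
  intro t ht
  have hzt : 1 - conj z * t ≠ 0 :=
    (isUnit_one_sub_of_norm_lt_one (norm_conj_mul_lt_one hz ht)).ne_zero
  rw [(((hasSum_coef_mul_pow hz ht n).mul_right (t - z)).mul_right (1 - conj z * t)).tsum_eq,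
    div_mul_eq_mul_div, div_mul_cancel₀ _ hzt, geom_sum₂_mul]

/-- the generating identity
`tⁿ - zⁿ = Σ_{k≥1} (k a_k^n / (1-|z|²)) t^{k-1} (t-z)(1-z̄t)`, as an identity of
(coefficientwise convergent) power series on the open unit disc. -/
theorem stmt14 (z : ℂ) (hz : ‖z‖ < 1) (n : ℕ) (hn : 1 ≤ n) :
    ∀ t : ℂ, ‖t‖ < 1 →
      t ^ n - z ^ n
        = ∑' k : ℕ, (k : ℂ) * acoef z n k / (1 - z * (starRingEnd ℂ) z)
            * t ^ (k - 1) * (t - z) * (1 - (starRingEnd ℂ) z * t) :=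
  stmt14_general z hz n
end

section
/- Let L⁻ be a Lie algebra acting on a module M, with a positive-definite Hermitian form on Λ^q L⁻ ⊗ M making Λ^q L⁻ ⊗ M a pre-Hilbert space, and let σ-eigenspace structure be as in twisted loop algebras. Suppose x(-p)⊗v ∈ Λ^q(L⁻(g,σ)) ⊗ H ⊗ V is invariant under the reductive fixed subalgebra g^σ = g_0, acting diagonally. Then Σ_{ℓ=1}^q Σ_{b₀∈B₀} ((1/2)Σ_j (1/p_j + 1/p_ℓ) ad^j_{b₀} ad^ℓ_{b̌₀} (x(-p)) ⊗ v) + Σ_{ℓ,b₀} (1/p_ℓ) ad^ℓ_{b₀}(x(-p)) ⊗ b̌₀·v = 0, where ad^ℓ denotes the action on the ℓ-th wedge factor and B₀ is an orthonormal basis of g₀ with dual basis {b̌₀}. -/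
/-!
Let `D_u` be the derivation of the exterior algebra `Λ L⁻` extending the derivation
`x(-n) ↦ (1/n) [u, x](-n)` of `L⁻`. Applying `D_{b₀ⱼ} ⊗ id` to the `b̌₀ⱼ`-invariance relation
and summing over `j` gives the identity with the weight `1/p_{ℓ'}` in place of
`(1/p_{ℓ'} + 1/p_ℓ)/2` in the double sum. Both weights give the same sum, because
`Σⱼ ad^{ℓ'}_{b₀ⱼ} ad^ℓ_{b̌₀ⱼ}` is symmetric in `ℓ, ℓ'`: operators on different wedge slots commute
and the Casimir tensor `Σⱼ b₀ⱼ ⊗ b̌₀ⱼ` of the symmetric form `B` is symmetric.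
-/

set_option synthInstance.maxHeartbeats 400000
open scoped TensorProduct

/-- The operator `ad^ℓ_u` acting only on the `ℓ`-th wedge slot of a `q`-tuple of
elements of the (negative part of the) loop algebra, modeled as finitely supported
functions `ℕ →₀ g` (`x(-p)` is `Finsupp.single p x`). -/
noncomputable def adSlot {g : Type*} [LieRing g] [LieAlgebra ℂ g] {q : ℕ}
    (u : g) (ℓ : Fin q) (Y : Fin q → (ℕ →₀ g)) : Fin q → (ℕ →₀ g) :=
  Function.update Y ℓ (Finsupp.mapRange (fun w => ⁅u, w⁆) (lie_zero u) (Y ℓ))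

namespace ExteriorAlgebra

variable {R V : Type*} [CommRing R] [AddCommGroup V] [Module R V]

open TrivSqZeroExt in
/-- Dual-number trick: the `ε`-component of this algebra map is the derivation extending `f`. -/
noncomputable def liftDualNumber (f : V →ₗ[R] V) :
    ExteriorAlgebra R V →ₐ[R] TrivSqZeroExt (ExteriorAlgebra R V) (ExteriorAlgebra R V) :=
  lift R ⟨{ toFun := fun v => inl (ι R v) + inr (ι R (f v))
            map_add' := fun v w => by ext <;> simp
            map_smul' := fun c v => by ext <;> simp },
    fun v => by ext <;> simp [fst_mul, snd_mul, ι_add_mul_swap]⟩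

theorem fst_liftDualNumber (f : V →ₗ[R] V) (a : ExteriorAlgebra R V) :
    (liftDualNumber f a).fst = a := by
  have : (TrivSqZeroExt.fstHom R _ _).comp (liftDualNumber f) = AlgHom.id R _ := by
    ext v; simp [liftDualNumber]
  exact DFunLike.congr_fun this a

noncomputable def liftDerivation (f : V →ₗ[R] V) :
    ExteriorAlgebra R V →ₗ[R] ExteriorAlgebra R V where
  toFun a := (liftDualNumber f a).snd
  map_add' a b := by simp
  map_smul' c a := by simp

theorem liftDerivation_ι (f : V →ₗ[R] V) (v : V) : liftDerivation f (ι R v) = ι R (f v) := by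
  simp [liftDerivation, liftDualNumber]

theorem liftDerivation_one (f : V →ₗ[R] V) : liftDerivation f 1 = 0 := by
  simp [liftDerivation]

theorem liftDerivation_mul (f : V →ₗ[R] V) (a b : ExteriorAlgebra R V) :
    liftDerivation f (a * b) = a * liftDerivation f b + liftDerivation f a * b := by
  simp [liftDerivation, TrivSqZeroExt.snd_mul, fst_liftDualNumber]

theorem liftDerivation_ιMulti (f : V →ₗ[R] V) {n : ℕ} (Y : Fin n → V) :
    liftDerivation f (ιMulti R n Y)
      = ∑ ℓ : Fin n, ιMulti R n (Function.update Y ℓ (f (Y ℓ))) := by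
  induction n with
  | zero => simp [liftDerivation_one]
  | succ n ih =>
    simp only [ιMulti_succ_apply, liftDerivation_mul, liftDerivation_ι, ih, Fin.sum_univ_succ,
      Finset.mul_sum]
    rw [add_comm]
    congr 1
    refine Finset.sum_congr rfl fun i _ => ?_
    rw [Function.update_of_ne (Fin.succ_ne_zero i).symm]
    exact congrArg _ (congrArg _ (Fin.tail_update_succ Y i _).symm)

end ExteriorAlgebra

section DualBasis

open Submodule

variable {K N W ι : Type*} [CommRing K] [AddCommGroup N] [Module K N] [AddCommGroup W]
  [Module K W] [Fintype ι] [DecidableEq ι] {B : LinearMap.BilinForm K N} {b bd : ι → N}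

theorem eq_sum_bilin_smul_of_mem_span (hdual : ∀ i j, B (b i) (bd j) = if i = j then 1 else 0)
    {w : N} (hw : w ∈ span K (Set.range b)) : w = ∑ i, B w (bd i) • b i := by
  obtain ⟨c, rfl⟩ := (mem_span_range_iff_exists_fun K).mp hw
  refine Finset.sum_congr rfl fun i _ => ?_
  simp [hdual]

theorem sum_apply_dual_comm (hsymm : ∀ x y, B x y = B y x)
    (hdual : ∀ i j, B (b i) (bd j) = if i = j then 1 else 0)
    (hmem : ∀ j, bd j ∈ span K (Set.range b)) (G : N →ₗ[K] N →ₗ[K] W) :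
    ∑ j, G (b j) (bd j) = ∑ j, G (bd j) (b j) := by
  have expand := fun j => eq_sum_bilin_smul_of_mem_span hdual (hmem j)
  calc ∑ j, G (b j) (bd j) = ∑ j, ∑ i, B (bd j) (bd i) • G (b j) (b i) := by
        refine Finset.sum_congr rfl fun j _ => ?_
        conv_lhs => rw [expand j]
        simp
    _ = ∑ i, ∑ j, B (bd i) (bd j) • G (b j) (b i) := by
        rw [Finset.sum_comm]
        exact Finset.sum_congr rfl fun i _ => Finset.sum_congr rfl fun j _ => by rw [hsymm]
    _ = ∑ i, G (bd i) (b i) := by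
        refine Finset.sum_congr rfl fun i _ => ?_
        conv_rhs => rw [expand i]
        simp

end DualBasis

theorem sum_half_add_smul_of_sum_symm {K W ι κ : Type*} [Field K] [CharZero K]
    [AddCommGroup W] [Module K W] [Fintype ι] [Fintype κ] (w : κ → K) (T : ι → κ → κ → W)
    (hT : ∀ a b, ∑ j, T j a b = ∑ j, T j b a) :
    ∑ j, ∑ a, ∑ b, ((1 / 2) * (w a + w b)) • T j a b = ∑ j, ∑ a, ∑ b, w a • T j a b := by
  have pull : ∀ c : κ → κ → K,
      ∑ j, ∑ a, ∑ b, c a b • T j a b = ∑ a, ∑ b, c a b • ∑ j, T j a b := by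
    intro c
    simp_rw [Finset.smul_sum]
    rw [Finset.sum_comm]
    exact Finset.sum_congr rfl fun a _ => Finset.sum_comm
  have swap : ∑ a, ∑ b, w b • ∑ j, T j a b = ∑ a, ∑ b, w a • ∑ j, T j a b := by
    rw [Finset.sum_comm]
    simp_rw [hT]
  rw [pull, pull]
  calc ∑ a, ∑ b, ((1 / 2) * (w a + w b)) • ∑ j, T j a b
      = (1 / 2 : K) • (∑ a, ∑ b, w a • ∑ j, T j a b + ∑ a, ∑ b, w b • ∑ j, T j a b) := by
        simp only [mul_smul, add_smul, ← Finset.sum_add_distrib, Finset.smul_sum]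
    _ = ∑ a, ∑ b, w a • ∑ j, T j a b := by
        rw [swap, ← two_smul K, smul_smul]
        norm_num

section LoopAlgebra

open ExteriorAlgebra

variable {g : Type*} [LieRing g] [LieAlgebra ℂ g] {q : ℕ}

theorem ιMulti_adSlot_add (u u' : g) (ℓ : Fin q) (Y : Fin q → (ℕ →₀ g)) :
    ιMulti ℂ q (adSlot (u + u') ℓ Y)
      = ιMulti ℂ q (adSlot u ℓ Y) + ιMulti ℂ q (adSlot u' ℓ Y) := by
  have : Finsupp.mapRange (fun w => ⁅u + u', w⁆) (lie_zero _) (Y ℓ)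
      = Finsupp.mapRange (fun w => ⁅u, w⁆) (lie_zero u) (Y ℓ)
        + Finsupp.mapRange (fun w => ⁅u', w⁆) (lie_zero u') (Y ℓ) := by
    ext; simp [add_lie]
  rw [adSlot, this, AlternatingMap.map_update_add]
  rfl

theorem ιMulti_adSlot_smul (c : ℂ) (u : g) (ℓ : Fin q) (Y : Fin q → (ℕ →₀ g)) :
    ιMulti ℂ q (adSlot (c • u) ℓ Y) = c • ιMulti ℂ q (adSlot u ℓ Y) := by
  have : Finsupp.mapRange (fun w => ⁅c • u, w⁆) (lie_zero _) (Y ℓ)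
      = c • Finsupp.mapRange (fun w => ⁅u, w⁆) (lie_zero u) (Y ℓ) := by
    ext; simp [smul_lie]
  rw [adSlot, this, AlternatingMap.map_update_smul]
  rfl

theorem adSlot_comm {ℓ ℓ' : Fin q} (h : ℓ ≠ ℓ') (u w : g) (Y : Fin q → (ℕ →₀ g)) :
    adSlot u ℓ (adSlot w ℓ' Y) = adSlot w ℓ' (adSlot u ℓ Y) := by
  rw [adSlot, adSlot, adSlot, adSlot, Function.update_of_ne h, Function.update_of_ne h.symm,
    Function.update_comm h]

theorem sum_ιMulti_adSlot_adSlot_comm {ι : Type*} [Fintype ι] [DecidableEq ι]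
    {B : LinearMap.BilinForm ℂ g} {b bd : ι → g} (hsymm : ∀ x y, B x y = B y x)
    (hdual : ∀ i j, B (b i) (bd j) = if i = j then 1 else 0)
    (hmem : ∀ j, bd j ∈ Submodule.span ℂ (Set.range b)) (ℓ ℓ' : Fin q) (Y : Fin q → (ℕ →₀ g)) :
    ∑ j, ιMulti ℂ q (adSlot (b j) ℓ (adSlot (bd j) ℓ' Y))
      = ∑ j, ιMulti ℂ q (adSlot (b j) ℓ' (adSlot (bd j) ℓ Y)) := by
  rcases eq_or_ne ℓ ℓ' with rfl | h
  · rfl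
  let G : g →ₗ[ℂ] g →ₗ[ℂ] ExteriorAlgebra ℂ (ℕ →₀ g) :=
    LinearMap.mk₂ ℂ (fun u w => ιMulti ℂ q (adSlot u ℓ (adSlot w ℓ' Y)))
      (fun u u' w => ιMulti_adSlot_add u u' ℓ _)
      (fun c u w => ιMulti_adSlot_smul c u ℓ _)
      (fun u w w' => by simp only [adSlot_comm h u, ιMulti_adSlot_add])
      (fun c u w => by simp only [adSlot_comm h u, ιMulti_adSlot_smul])
  calc ∑ j, ιMulti ℂ q (adSlot (b j) ℓ (adSlot (bd j) ℓ' Y)) = ∑ j, G (b j) (bd j) := rfl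
    _ = ∑ j, G (bd j) (b j) := sum_apply_dual_comm hsymm hdual hmem G
    _ = _ := by simp only [G, LinearMap.mk₂_apply, adSlot_comm h]

noncomputable def weightedAd (u : g) : (ℕ →₀ g) →ₗ[ℂ] (ℕ →₀ g) :=
  Finsupp.lsum ℂ fun n => (n : ℂ)⁻¹ • (Finsupp.lsingle n ∘ₗ (LieAlgebra.ad ℂ g u : g →ₗ[ℂ] g))

theorem weightedAd_single (u : g) (n : ℕ) (y : g) :
    weightedAd u (Finsupp.single n y) = (n : ℂ)⁻¹ • Finsupp.single n ⁅u, y⁆ := by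
  simp [weightedAd]

theorem adSlot_exists_single {p : Fin q → ℕ} {Y : Fin q → (ℕ →₀ g)}
    (hY : ∀ k, ∃ y, Y k = Finsupp.single (p k) y) (u : g) (ℓ : Fin q) :
    ∀ k, ∃ y, adSlot u ℓ Y k = Finsupp.single (p k) y := by
  intro k
  obtain ⟨y, hy⟩ := hY k
  rcases eq_or_ne k ℓ with rfl | h
  · exact ⟨⁅u, y⁆, by simp [adSlot, hy]⟩
  · exact ⟨y, by simp [adSlot, Function.update_of_ne h, hy]⟩

theorem liftDerivation_weightedAd_ιMulti {p : Fin q → ℕ} {Y : Fin q → (ℕ →₀ g)}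
    (hY : ∀ k, ∃ y, Y k = Finsupp.single (p k) y) (u : g) :
    liftDerivation (weightedAd u) (ιMulti ℂ q Y)
      = ∑ ℓ, (p ℓ : ℂ)⁻¹ • ιMulti ℂ q (adSlot u ℓ Y) := by
  rw [liftDerivation_ιMulti]
  refine Finset.sum_congr rfl fun ℓ _ => ?_
  obtain ⟨y, hy⟩ := hY ℓ
  rw [adSlot, ← AlternatingMap.map_update_smul, hy, weightedAd_single, Finsupp.mapRange_single]

theorem weightedAd_sum_eq_zero_of_invariant {M : Type*} [AddCommGroup M] [Module ℂ M]
    {p : Fin q → ℕ} {X : Fin q → (ℕ →₀ g)} (hX : ∀ k, ∃ y, X k = Finsupp.single (p k) y)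
    (u w : g) (v m : M)
    (h : ∑ ℓ, ιMulti ℂ q (adSlot w ℓ X) ⊗ₜ[ℂ] v + ιMulti ℂ q X ⊗ₜ[ℂ] m = 0) :
    ∑ ℓ', ∑ ℓ, (p ℓ' : ℂ)⁻¹ • (ιMulti ℂ q (adSlot u ℓ' (adSlot w ℓ X)) ⊗ₜ[ℂ] v)
      + ∑ ℓ, (p ℓ : ℂ)⁻¹ • (ιMulti ℂ q (adSlot u ℓ X) ⊗ₜ[ℂ] m) = 0 := by
  have h' := congrArg (LinearMap.rTensor M (liftDerivation (weightedAd u))) h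
  simp only [map_add, map_sum, map_zero, LinearMap.rTensor_tmul,
    liftDerivation_weightedAd_ιMulti hX,
    liftDerivation_weightedAd_ιMulti (adSlot_exists_single hX w _),
    TensorProduct.sum_tmul, ← TensorProduct.smul_tmul'] at h'
  rwa [Finset.sum_comm]

end LoopAlgebra

theorem stmt15_general {g M : Type*} [LieRing g] [LieAlgebra ℂ g]
    [AddCommGroup M] [Module ℂ M]
    (σ : g →ₗ⁅ℂ⁆ g)
    (B : LinearMap.BilinForm ℂ g)
    (hsymm : ∀ x y : g, B x y = B y x)
    (ι₀ : Type*) [Fintype ι₀] [DecidableEq ι₀] (b₀ bd₀ : ι₀ → g)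
    (hfix : ∀ j, σ (b₀ j) = b₀ j ∧ σ (bd₀ j) = bd₀ j)
    (hspan₀ : ∀ u : g, σ u = u → u ∈ Submodule.span ℂ (Set.range b₀))
    (hdual : ∀ i j, B (b₀ i) (bd₀ j) = if i = j then (1 : ℂ) else 0)
    (ρ : g →ₗ[ℂ] Module.End ℂ M)
    (q : ℕ) (x : Fin q → g) (p : Fin q → ℕ)
    (X : Fin q → (ℕ →₀ g)) (hX : ∀ ℓ, X ℓ = Finsupp.single (p ℓ) (x ℓ))
    (v : M)
    -- `g₀`-invariance of `x₁(-p₁) ∧ … ∧ x_q(-p_q) ⊗ v`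
    (hinvar : ∀ u : g, σ u = u →
      (∑ ℓ : Fin q, (ExteriorAlgebra.ιMulti ℂ q (adSlot u ℓ X)) ⊗ₜ[ℂ] v)
        + (ExteriorAlgebra.ιMulti ℂ q X) ⊗ₜ[ℂ] (ρ u v) = 0) :
    (∑ j : ι₀, ∑ ℓ' : Fin q, ∑ ℓ : Fin q,
        (((1 : ℂ) / 2) * ((p ℓ' : ℂ)⁻¹ + (p ℓ : ℂ)⁻¹)) •
          ((ExteriorAlgebra.ιMulti ℂ q (adSlot (b₀ j) ℓ' (adSlot (bd₀ j) ℓ X))) ⊗ₜ[ℂ] v))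
      + (∑ j : ι₀, ∑ ℓ : Fin q,
          ((p ℓ : ℂ)⁻¹) •
            ((ExteriorAlgebra.ιMulti ℂ q (adSlot (b₀ j) ℓ X)) ⊗ₜ[ℂ] (ρ (bd₀ j) v))) = 0 := by
  have hXsingle : ∀ k, ∃ y, X k = Finsupp.single (p k) y := fun k => ⟨x k, hX k⟩
  have hmem : ∀ j, bd₀ j ∈ Submodule.span ℂ (Set.range b₀) := fun j => hspan₀ _ (hfix j).2
  rw [sum_half_add_smul_of_sum_symm (fun ℓ => (p ℓ : ℂ)⁻¹)
    (fun j ℓ' ℓ => ExteriorAlgebra.ιMulti ℂ q (adSlot (b₀ j) ℓ' (adSlot (bd₀ j) ℓ X)) ⊗ₜ[ℂ] v),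
    ← Finset.sum_add_distrib]
  · exact Finset.sum_eq_zero fun j _ =>
      weightedAd_sum_eq_zero_of_invariant hXsingle (b₀ j) (bd₀ j) v _ (hinvar _ (hfix j).2)
  · intro ℓ' ℓ
    simp only [← TensorProduct.sum_tmul, sum_ιMulti_adSlot_adSlot_comm hsymm hdual hmem ℓ' ℓ]

/-- (Lemma 3.17 of the paper.)  If the pure tensor
`x₁(-p₁) ∧ … ∧ x_q(-p_q) ⊗ v ∈ Λ^q L⁻(g,σ) ⊗ M` is invariant under the diagonal action
of the fixed subalgebra `g₀ = g^σ` (with dual bases `b₀, b̌₀` of `g₀` with respect to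
the invariant form `B`), then
`(1/2) Σ_{j,ℓ,ℓ'} (1/p_{ℓ'} + 1/p_ℓ) ad^{ℓ'}_{b₀ⱼ} ad^ℓ_{b̌₀ⱼ}(x⃗(-p⃗)) ⊗ v
 + Σ_{j,ℓ} (1/p_ℓ) ad^ℓ_{b₀ⱼ}(x⃗(-p⃗)) ⊗ b̌₀ⱼ·v = 0`. -/
theorem stmt15 {g M : Type*} [LieRing g] [LieAlgebra ℂ g]
    [AddCommGroup M] [Module ℂ M]
    (m : ℕ) (hm : 0 < m) (ε : ℂ) (hε : IsPrimitiveRoot ε m)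
    (σ : g →ₗ⁅ℂ⁆ g) (hord : σ.toLinearMap ^ m = 1)
    (B : LinearMap.BilinForm ℂ g)
    (hsymm : ∀ x y : g, B x y = B y x)
    (hinv : ∀ x y z : g, B ⁅x, y⁆ z = B x ⁅y, z⁆)
    (ι₀ : Type*) [Fintype ι₀] [DecidableEq ι₀] (b₀ bd₀ : ι₀ → g)
    (hfix : ∀ j, σ (b₀ j) = b₀ j ∧ σ (bd₀ j) = bd₀ j)
    (hspan₀ : ∀ u : g, σ u = u → u ∈ Submodule.span ℂ (Set.range b₀))
    (hdual : ∀ i j, B (b₀ i) (bd₀ j) = if i = j then (1 : ℂ) else 0)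
    (ρ : g →ₗ[ℂ] Module.End ℂ M)
    (hρlie : ∀ x y : g, σ x = x → σ y = y → ρ ⁅x, y⁆ = ρ x * ρ y - ρ y * ρ x)
    (q : ℕ) (x : Fin q → g) (p : Fin q → ℕ) (hp : ∀ ℓ, 0 < p ℓ)
    (hdeg : ∀ ℓ, σ (x ℓ) = ε ^ (-(p ℓ : ℤ)) • x ℓ)
    (X : Fin q → (ℕ →₀ g)) (hX : ∀ ℓ, X ℓ = Finsupp.single (p ℓ) (x ℓ))
    (v : M)
    -- `g₀`-invariance of `x₁(-p₁) ∧ … ∧ x_q(-p_q) ⊗ v`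
    (hinvar : ∀ u : g, σ u = u →
      (∑ ℓ : Fin q, (ExteriorAlgebra.ιMulti ℂ q (adSlot u ℓ X)) ⊗ₜ[ℂ] v)
        + (ExteriorAlgebra.ιMulti ℂ q X) ⊗ₜ[ℂ] (ρ u v) = 0) :
    (∑ j : ι₀, ∑ ℓ' : Fin q, ∑ ℓ : Fin q,
        (((1 : ℂ) / 2) * ((p ℓ' : ℂ)⁻¹ + (p ℓ : ℂ)⁻¹)) •
          ((ExteriorAlgebra.ιMulti ℂ q (adSlot (b₀ j) ℓ' (adSlot (bd₀ j) ℓ X))) ⊗ₜ[ℂ] v))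
      + (∑ j : ι₀, ∑ ℓ : Fin q,
          ((p ℓ : ℂ)⁻¹) •
            ((ExteriorAlgebra.ιMulti ℂ q (adSlot (b₀ j) ℓ X)) ⊗ₜ[ℂ] (ρ (bd₀ j) v))) = 0 :=
  stmt15_general σ B hsymm ι₀ b₀ bd₀ hfix hspan₀ hdual ρ q x p X hX v hinvar
end
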